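/- Fix c > 0 and suppose f solves the max-matching PDE with parameter c. Assume moreover that the function t ↦ ∫₀^∞ f(x,t) dx is differentiable on [0,1] with derivative ∫₀^∞ (∂f/∂t)(x,t) dx (differentiation under the integral sign is valid). Then for every t ∈ [0,1], e^{−4c} ≤ ∫₀^∞ f(x,t) dx ≤ 1. -/

import Mathlib

open MeasureTheory Set

/-- The right-hand side of the max-matching PDE with parameter `c`. -/
noncomputable def maxMatchRHS (c : ℝ) (f : ℝ → ℝ → ℝ) (x t : ℝ) : ℝ :=
  -(min x (2 * c)) * f x t
    - ((∫ x' in Set.Ioi (0 : ℝ), min x' (2 * c) * f x' t) /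
        (∫ x' in Set.Ioi (0 : ℝ), f x' t)) * f x t
    + (∫ x' in (0 : ℝ)..x, min x' (2 * c) * f x' t * f (x - x') t) /
        (∫ x' in Set.Ioi (0 : ℝ), f x' t)

/-- `f` solves the max-matching PDE with parameter `c`. -/
def SolvesMaxMatchingPDE (c : ℝ) (f : ℝ → ℝ → ℝ) : Prop :=
  Measurable (Function.uncurry f) ∧
  (∀ x t, 0 ≤ f x t) ∧
  (∀ x t, x < 0 → f x t = 0) ∧
  (∀ t ∈ Set.Icc (0 : ℝ) 1,
    IntegrableOn (fun x => f x t) (Set.Ioi 0) ∧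
    IntegrableOn (fun x => x * f x t) (Set.Ioi 0) ∧
    0 < ∫ x in Set.Ioi (0 : ℝ), f x t) ∧
  (∀ x, 0 ≤ x → f x 0 = Real.exp (-x)) ∧
  (∀ x, 0 ≤ x → ∀ t ∈ Set.Icc (0 : ℝ) 1,
    HasDerivWithinAt (fun s => f x s) (maxMatchRHS c f x t) (Set.Icc 0 1) t)

lemma conv_le (c : ℝ) (hc : 0 < c) (f : ℝ → ℝ → ℝ)
    (hm : Measurable (Function.uncurry f)) (hpos : ∀ x t, 0 ≤ f x t) (t : ℝ)
    (hInt : IntegrableOn (fun x => f x t) (Ioi 0))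
    (hkf : IntegrableOn (fun x => min x (2*c) * f x t) (Ioi 0))
    (hconv : IntegrableOn (fun x => ∫ x' in (0:ℝ)..x, min x' (2*c) * f x' t * f (x - x') t)
      (Ioi 0)) :
    (∫ x in Ioi (0:ℝ), ∫ x' in (0:ℝ)..x, min x' (2*c) * f x' t * f (x - x') t) ≤
      (∫ x in Ioi (0:ℝ), min x (2*c) * f x t) * (∫ x in Ioi (0:ℝ), f x t) := by
  set N := ∫ x in Ioi (0:ℝ), f x t with hNdef
  set M := ∫ x in Ioi (0:ℝ), min x (2*c) * f x t with hMdef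
  have hmt : Measurable fun x => f x t := hm.comp (measurable_id.prodMk measurable_const)
  have hM0 : 0 ≤ M := setIntegral_nonneg measurableSet_Ioi fun x hx =>
    mul_nonneg (le_min hx.le (by positivity)) (hpos _ _)
  -- the product kernel
  set φ : ℝ × ℝ → ENNReal := fun p =>
    if 0 < p.2 ∧ p.2 ≤ p.1 then ENNReal.ofReal (min p.2 (2*c) * f p.2 t * f (p.1 - p.2) t)
    else 0 with hφdef
  have hφm : Measurable φ := by
    apply Measurable.ite
    · exact (measurableSet_lt measurable_const measurable_snd).inter
        (measurableSet_le measurable_snd measurable_fst)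
    · exact ENNReal.measurable_ofReal.comp
        (((measurable_snd.min measurable_const).mul
          (hm.comp (measurable_snd.prodMk measurable_const))).mul
          (hm.comp ((measurable_fst.sub measurable_snd).prodMk measurable_const)))
    · exact measurable_const
  have hψpos : ∀ x' : ℝ, 0 ≤ x' → 0 ≤ min x' (2*c) * f x' t := fun x' hx' =>
    mul_nonneg (le_min hx' (by positivity)) (hpos _ _)
  -- step 1: pointwise bound
  have step1 : ∀ x : ℝ, x ∈ Ioi (0:ℝ) →
      ENNReal.ofReal (∫ x' in (0:ℝ)..x, min x' (2*c) * f x' t * f (x - x') t) ≤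
        ∫⁻ x', φ (x, x') := by
    intro x hx
    have hind : ∀ x' : ℝ, φ (x, x') = (Ioc (0:ℝ) x).indicator
        (fun x' => ENNReal.ofReal (min x' (2*c) * f x' t * f (x - x') t)) x' := by
      intro x'; simp [hφdef, Set.indicator_apply, Set.mem_Ioc]
    rw [lintegral_congr hind, lintegral_indicator measurableSet_Ioc _]
    rw [intervalIntegral.integral_of_le (le_of_lt hx)]
    by_cases hI : IntegrableOn (fun x' => min x' (2*c) * f x' t * f (x - x') t) (Ioc 0 x)
    · rw [ofReal_integral_eq_lintegral_ofReal hI ?_]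
      filter_upwards [ae_restrict_mem measurableSet_Ioc] with x' hx'
      exact mul_nonneg (hψpos x' hx'.1.le) (hpos _ _)
    · rw [integral_undef hI]; simp
  -- step 2
  have step2 : ENNReal.ofReal (∫ x in Ioi (0:ℝ),
      ∫ x' in (0:ℝ)..x, min x' (2*c) * f x' t * f (x - x') t) ≤
      ∫⁻ x in Ioi (0:ℝ), ∫⁻ x', φ (x, x') := by
    rw [ofReal_integral_eq_lintegral_ofReal hconv ?_]
    · apply lintegral_mono_ae
      filter_upwards [ae_restrict_mem measurableSet_Ioi] with x hx
      exact step1 x hx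
    · filter_upwards [ae_restrict_mem measurableSet_Ioi] with x hx
      exact intervalIntegral.integral_nonneg hx.le fun x' hx' =>
        mul_nonneg (hψpos x' hx'.1) (hpos _ _)
  -- step 3: swap
  have step3 : (∫⁻ x in Ioi (0:ℝ), ∫⁻ x', φ (x, x')) ≤ ∫⁻ x', ∫⁻ x, φ (x, x') := by
    calc (∫⁻ x in Ioi (0:ℝ), ∫⁻ x', φ (x, x')) ≤ ∫⁻ x, ∫⁻ x', φ (x, x') :=
          setLIntegral_le_lintegral _ _
      _ = ∫⁻ x', ∫⁻ x, φ (x, x') := lintegral_lintegral_swap hφm.aemeasurable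
  -- step 4: compute inner integral
  set L : ENNReal := ∫⁻ y in Ici (0:ℝ), ENNReal.ofReal (f y t) with hLdef
  have step4 : ∀ x' : ℝ, (∫⁻ x, φ (x, x')) =
      (Ioi (0:ℝ)).indicator (fun x' => ENNReal.ofReal (min x' (2*c) * f x' t)) x' * L := by
    intro x'
    by_cases hx' : 0 < x'
    · have : ∀ x : ℝ, φ (x, x') = ENNReal.ofReal (min x' (2*c) * f x' t) *
          (if 0 ≤ x - x' then ENNReal.ofReal (f (x - x') t) else 0) := by
        intro x
        by_cases h : x' ≤ x
        · rw [hφdef]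
          simp only [hx', h, and_self, if_true, sub_nonneg.mpr h, if_pos]
          rw [ENNReal.ofReal_mul (hψpos x' hx'.le)]
        · rw [hφdef]
          simp [h, hx', sub_nonneg, mul_comm]
      rw [lintegral_congr this, lintegral_const_mul _ ?_]
      · congr 1
        · simp [Set.indicator_apply, hx']
        · have := lintegral_add_right_eq_self (μ := volume)
            (fun y => if 0 ≤ y then ENNReal.ofReal (f y t) else 0) (-x')
          simp only [← sub_eq_add_neg] at this
          have heq : (fun y => (Ici (0:ℝ)).indicator (fun y => ENNReal.ofReal (f y t)) y)
              = fun y => if 0 ≤ y then ENNReal.ofReal (f y t) else 0 := by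
            ext y; simp [Set.indicator_apply, Set.mem_Ici]
          rw [hLdef, ← lintegral_indicator measurableSet_Ici, heq]
          exact this
      · exact Measurable.ite (measurableSet_le measurable_const (measurable_id.sub measurable_const))
          (ENNReal.measurable_ofReal.comp
            ((hm.comp ((measurable_id.sub measurable_const).prodMk measurable_const))))
          measurable_const
    · have : ∀ x : ℝ, φ (x, x') = 0 := by
        intro x; rw [hφdef]; simp [hx']
      rw [lintegral_congr this]
      simp [Set.indicator_apply, hx']
  -- step 5
  have hL : L = ENNReal.ofReal N := by
    rw [hLdef, ← setLIntegral_congr (Ioi_ae_eq_Ici (a := (0:ℝ))),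
      ← ofReal_integral_eq_lintegral_ofReal hInt ?_]
    filter_upwards [ae_restrict_mem measurableSet_Ioi] with x hx using hpos _ _
  have step5 : (∫⁻ x', ∫⁻ x, φ (x, x')) = ENNReal.ofReal M * ENNReal.ofReal N := by
    rw [lintegral_congr step4,
      lintegral_mul_const L ((show Measurable (fun x : ℝ => min x (2*c) * f x t) from (measurable_id'.min measurable_const).mul hmt).ennreal_ofReal.indicator measurableSet_Ioi),
      lintegral_indicator measurableSet_Ioi, hL,
      ← ofReal_integral_eq_lintegral_ofReal hkf ?_]
    filter_upwards [ae_restrict_mem measurableSet_Ioi] with x hx using hψpos x hx.le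
  -- conclude
  have hN0 : 0 ≤ N := setIntegral_nonneg measurableSet_Ioi fun x hx => hpos _ _
  have : ENNReal.ofReal (∫ x in Ioi (0:ℝ),
      ∫ x' in (0:ℝ)..x, min x' (2*c) * f x' t * f (x - x') t) ≤ ENNReal.ofReal (M * N) := by
    rw [ENNReal.ofReal_mul hM0]
    exact le_trans step2 (le_trans step3 (le_of_eq step5))
  exact (ENNReal.ofReal_le_ofReal_iff (mul_nonneg hM0 hN0)).1 this

lemma deriv_bounds (c : ℝ) (hc : 0 < c) (f : ℝ → ℝ → ℝ)
    (hm : Measurable (Function.uncurry f)) (hpos : ∀ x t, 0 ≤ f x t) (t : ℝ)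
    (hInt : IntegrableOn (fun x => f x t) (Ioi 0))
    (hN : 0 < ∫ x in Ioi (0:ℝ), f x t) :
    -(4*c) * (∫ x in Ioi (0:ℝ), f x t) ≤ (∫ x in Ioi (0:ℝ), maxMatchRHS c f x t) ∧
      (∫ x in Ioi (0:ℝ), maxMatchRHS c f x t) ≤ 0 := by
  have hmt : Measurable fun x => f x t := hm.comp (measurable_id.prodMk measurable_const)
  have hψpos : ∀ x' : ℝ, 0 ≤ x' → 0 ≤ min x' (2*c) * f x' t := fun x' hx' =>
    mul_nonneg (le_min hx' (by positivity)) (hpos _ _)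
  have hkf : IntegrableOn (fun x => min x (2*c) * f x t) (Ioi 0) := by
    apply Integrable.mono (hInt.const_mul (2*c))
      ((show Measurable (fun x : ℝ => min x (2*c) * f x t) from (measurable_id'.min measurable_const).mul hmt).aestronglyMeasurable)
    filter_upwards [ae_restrict_mem measurableSet_Ioi] with x hx
    rw [Real.norm_eq_abs, Real.norm_eq_abs, abs_of_nonneg (hψpos x hx.le),
      abs_of_nonneg (mul_nonneg (by positivity) (hpos _ _))]
    exact mul_le_mul_of_nonneg_right (min_le_right _ _) (hpos _ _)
  set N := ∫ x in Ioi (0:ℝ), f x t with hNdef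
  set M := ∫ x in Ioi (0:ℝ), min x (2*c) * f x t with hMdef
  have hM0 : 0 ≤ M := setIntegral_nonneg measurableSet_Ioi fun x hx => hψpos x hx.le
  have hMle : M ≤ 2*c*N := by
    rw [hMdef, hNdef, ← integral_const_mul]
    apply setIntegral_mono_on hkf (hInt.const_mul (2*c)) measurableSet_Ioi
    intro x hx
    exact mul_le_mul_of_nonneg_right (min_le_right _ _) (hpos _ _)
  set g : ℝ → ℝ := fun x => -(min x (2*c)) * f x t - M / N * f x t with hgdef
  have hg : IntegrableOn g (Ioi 0) := by
    apply Integrable.sub _ (hInt.const_mul (M/N))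
    simp only [neg_mul]
    exact hkf.neg
  have hgint : ∫ x in Ioi (0:ℝ), g x = -M - M := by
    have e1 : (fun x => g x) = fun x => -(min x (2*c) * f x t) - M / N * f x t := by
      ext x; rw [hgdef]; ring
    have hkfneg : IntegrableOn (fun x => -(min x (2*c) * f x t)) (Ioi 0) := hkf.neg
    rw [e1, integral_sub hkfneg (hInt.const_mul (M/N)), integral_neg, integral_const_mul,
      ← hMdef, ← hNdef, div_mul_cancel₀ M (ne_of_gt hN)]
  set conv : ℝ → ℝ := fun x => ∫ x' in (0:ℝ)..x, min x' (2*c) * f x' t * f (x - x') t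
    with hconvdef
  have hconvpos : ∀ x : ℝ, x ∈ Ioi (0:ℝ) → 0 ≤ conv x := by
    intro x hx
    exact intervalIntegral.integral_nonneg hx.le fun x' hx' =>
      mul_nonneg (hψpos x' hx'.1) (hpos _ _)
  have hRHS : ∀ x, maxMatchRHS c f x t = g x + conv x / N := fun x => rfl
  by_cases hRI : IntegrableOn (fun x => maxMatchRHS c f x t) (Ioi 0)
  · have hh : IntegrableOn (fun x => conv x / N) (Ioi 0) := by
      have h2 := hRI.sub hg
      apply h2.congr
      filter_upwards with x
      simp only [Pi.sub_apply]
      rw [hRHS x]; ring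
    have hsplit : (∫ x in Ioi (0:ℝ), maxMatchRHS c f x t) =
        (-M - M) + (∫ x in Ioi (0:ℝ), conv x / N) := by
      rw [← hgint, ← integral_add hg hh]
      exact integral_congr_ae (.of_forall hRHS)
    have hdiv0 : 0 ≤ ∫ x in Ioi (0:ℝ), conv x / N :=
      setIntegral_nonneg measurableSet_Ioi fun x hx => div_nonneg (hconvpos x hx) hN.le
    constructor
    · rw [hsplit]; nlinarith
    · have hconvI : IntegrableOn conv (Ioi 0) := by
        apply (hh.mul_const N).congr
        filter_upwards with x
        rw [div_mul_cancel₀ _ (ne_of_gt hN)]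
      have hcl : (∫ x in Ioi (0:ℝ), conv x) ≤ M * N :=
        conv_le c hc f hm hpos t hInt hkf hconvI
      have h3 : (∫ x in Ioi (0:ℝ), conv x) / N ≤ M := by
        rw [div_le_iff₀ hN]; exact hcl
      rw [hsplit, integral_div]
      linarith
  · rw [integral_undef hRI]
    constructor
    · nlinarith
    · exact le_refl 0

/-- Assuming differentiation under the integral sign is valid, the `L¹` norm
`∫₀^∞ f(x,t) dx` of a solution of the max-matching PDE stays in `[e^{-4c}, 1]`. -/
theorem stmt14 (c : ℝ) (hc : 0 < c) (f : ℝ → ℝ → ℝ) (hf : SolvesMaxMatchingPDE c f)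
    (hD : ∀ t ∈ Set.Icc (0 : ℝ) 1,
      HasDerivWithinAt (fun s => ∫ x in Set.Ioi (0 : ℝ), f x s)
        (∫ x in Set.Ioi (0 : ℝ), maxMatchRHS c f x t) (Set.Icc 0 1) t) :
    ∀ t ∈ Set.Icc (0 : ℝ) 1,
      Real.exp (-(4 * c)) ≤ (∫ x in Set.Ioi (0 : ℝ), f x t) ∧
      (∫ x in Set.Ioi (0 : ℝ), f x t) ≤ 1 := by
  obtain ⟨hm, hpos, hzero, hint, hinit, hpde⟩ := hf
  intro t ht
  have hmem : ∀ s ∈ Icc (0:ℝ) 1, 0 < ∫ x in Ioi (0:ℝ), f x s := fun s hs => (hint s hs).2.2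
  have hn0 : (∫ x in Ioi (0:ℝ), f x 0) = 1 := by
    rw [setIntegral_congr_fun measurableSet_Ioi (fun x hx => hinit x (le_of_lt hx))]
    exact integral_exp_neg_Ioi_zero
  have hbounds : ∀ s ∈ Icc (0:ℝ) 1,
      -(4*c) * (∫ x in Ioi (0:ℝ), f x s) ≤ (∫ x in Ioi (0:ℝ), maxMatchRHS c f x s) ∧
        (∫ x in Ioi (0:ℝ), maxMatchRHS c f x s) ≤ 0 := fun s hs =>
    deriv_bounds c hc f hm hpos s (hint s hs).1 (hmem s hs)
  have hcont : ContinuousOn (fun s => ∫ x in Ioi (0:ℝ), f x s) (Icc 0 1) :=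
    fun s hs => (hD s hs).continuousWithinAt
  have hDA : ∀ s ∈ Ioo (0:ℝ) 1, HasDerivAt (fun s => ∫ x in Ioi (0:ℝ), f x s)
      (∫ x in Ioi (0:ℝ), maxMatchRHS c f x s) s := fun s hs =>
    (hD s ⟨hs.1.le, hs.2.le⟩).hasDerivAt (Icc_mem_nhds hs.1 hs.2)
  -- upper bound
  have hanti : AntitoneOn (fun s => ∫ x in Ioi (0:ℝ), f x s) (Icc 0 1) := by
    apply antitoneOn_of_deriv_nonpos (convex_Icc 0 1) hcont
    · intro s hs
      rw [interior_Icc] at hs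
      exact (hDA s hs).differentiableAt.differentiableWithinAt
    · intro s hs
      rw [interior_Icc] at hs
      rw [(hDA s hs).deriv]
      exact (hbounds s ⟨hs.1.le, hs.2.le⟩).2
  have hupper : (∫ x in Ioi (0:ℝ), f x t) ≤ 1 := by
    have := hanti (left_mem_Icc.2 zero_le_one) ht ht.1
    simpa [hn0] using this
  -- lower bound
  have hexp : ∀ s : ℝ, HasDerivAt (fun s : ℝ => Real.exp (4*c*s))
      (Real.exp (4*c*s) * (4*c)) s := by
    intro s
    have h1 : HasDerivAt (fun s : ℝ => 4*c*s) (4*c) s := by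
      simpa using (hasDerivAt_id s).const_mul (4*c)
    exact h1.exp
  have hG : ∀ s ∈ Icc (0:ℝ) 1,
      HasDerivWithinAt (fun s => (∫ x in Ioi (0:ℝ), f x s) * Real.exp (4*c*s))
        ((∫ x in Ioi (0:ℝ), maxMatchRHS c f x s) * Real.exp (4*c*s) +
          (∫ x in Ioi (0:ℝ), f x s) * (Real.exp (4*c*s) * (4*c))) (Icc 0 1) s :=
    fun s hs => (hD s hs).mul (hexp s).hasDerivWithinAt
  have hmono : MonotoneOn (fun s => (∫ x in Ioi (0:ℝ), f x s) * Real.exp (4*c*s))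
      (Icc 0 1) := by
    apply monotoneOn_of_deriv_nonneg (convex_Icc 0 1)
    · intro s hs
      exact (hG s hs).continuousWithinAt
    · intro s hs
      rw [interior_Icc] at hs
      exact (((hG s ⟨hs.1.le, hs.2.le⟩).hasDerivAt
        (Icc_mem_nhds hs.1 hs.2)).differentiableAt).differentiableWithinAt
    · intro s hs
      rw [interior_Icc] at hs
      have hs' : s ∈ Icc (0:ℝ) 1 := ⟨hs.1.le, hs.2.le⟩
      rw [((hG s hs').hasDerivAt (Icc_mem_nhds hs.1 hs.2)).deriv]
      have h1 := (hbounds s hs').1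
      have h2 := (hmem s hs').le
      have h3 := Real.exp_pos (4*c*s)
      nlinarith
  have h01 : (1:ℝ) ≤ (∫ x in Ioi (0:ℝ), f x t) * Real.exp (4*c*t) := by
    have := hmono (left_mem_Icc.2 zero_le_one) ht ht.1
    simpa [hn0] using this
  have hlow : Real.exp (-(4*c*t)) ≤ ∫ x in Ioi (0:ℝ), f x t := by
    rw [Real.exp_neg, inv_le_iff_one_le_mul₀ (Real.exp_pos _)]
    linarith [h01]
  refine ⟨le_trans (Real.exp_le_exp.2 ?_) hlow, hupper⟩
  have := ht.2
  nlinarith
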